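/- Let Q be a positive integer, f(X) = c_n X^n + c_{n-1} X^{n-1} + ... + c_1 X ∈ ℤ[X] with zero constant term, and let δ be a positive integer dividing gcd(c_n, ..., c_2, Q). If the complete exponential sum S = ∑_{x=1}^{Q} e(f(x)/Q) is nonzero, then δ divides c_1 and S = δ · ∑_{x=1}^{Q/δ} e((f(x)/δ)/(Q/δ)). -/

import Mathlib

/-!
Write `Q = δ m`. Since the coefficients of degree `≥ 2` are divisible by `δ`, we have
`f = c₀ + c₁ X + δ q`, and `m ∣ q(x + m) - q(x)` gives `f(x + m) ≡ f(x) + c₁ m (mod Q)`.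
Shifting the summation variable by `m` therefore multiplies `S` by `e(c₁ / δ)`, so `S ≠ 0`
forces `e(c₁ / δ) = 1`, i.e. `δ ∣ c₁`. Then `f = δ g`, every summand equals `e(g(x) / m)`,
which has period `m`, and the `Q = δ m` terms make up `δ` full periods.
-/

open Finset

noncomputable def e (t : ℝ) : ℂ := Complex.exp (2 * Real.pi * Complex.I * t)

open Polynomial Function

theorem e_add (s t : ℝ) : e (s + t) = e s * e t := by
  rw [e, e, e, ← Complex.exp_add]
  push_cast
  ring_nf

theorem e_intCast (k : ℤ) : e k = 1 := by
  rw [e, ← Complex.exp_int_mul_two_pi_mul_I k]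
  push_cast
  ring_nf

theorem e_add_intCast (t : ℝ) (k : ℤ) : e (t + k) = e t := by
  rw [e_add, e_intCast, mul_one]

theorem e_intCast_div_eq_one_iff {c : ℤ} {d : ℕ} (hd : d ≠ 0) : e (c / d) = 1 ↔ (d : ℤ) ∣ c := by
  constructor
  · intro h
    obtain ⟨n, hn⟩ := Complex.exp_eq_one_iff.1 h
    have hcd : ((c / d : ℝ) : ℂ) = (n : ℝ) := by
      apply mul_left_cancel₀ (show 2 * Real.pi * Complex.I ≠ 0 by simp [Real.pi_ne_zero])
      rw [hn]; push_cast; ring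
    rw [Complex.ofReal_inj, div_eq_iff (by exact_mod_cast hd)] at hcd
    exact ⟨n, by rw [mul_comm]; exact_mod_cast hcd⟩
  · rintro ⟨n, rfl⟩
    rw [show ((d * n : ℤ) : ℝ) / d = n by push_cast; field_simp]
    exact e_intCast n

namespace Function.Periodic

variable {M : Type*} [AddCommMonoid M] {f : ℕ → M} {n : ℕ}

theorem sum_range_comp_add_one (hf : Periodic f n) :
    ∑ x ∈ range n, f (x + 1) = ∑ x ∈ range n, f x := by
  cases n with
  | zero => rfl
  | succ k => rw [sum_range_succ, sum_range_succ', hf.eq]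

theorem sum_range_comp_add (hf : Periodic f n) (a : ℕ) :
    ∑ x ∈ range n, f (x + a) = ∑ x ∈ range n, f x := by
  induction a with
  | zero => rfl
  | succ a ih =>
    rw [← ih, ← (hf.add_const a).sum_range_comp_add_one]
    exact sum_congr rfl fun x _ => by rw [add_right_comm, add_assoc]

theorem sum_Icc_one_eq_sum_range (hf : Periodic f n) :
    ∑ x ∈ Icc 1 n, f x = ∑ x ∈ range n, f x := by
  rw [← Ico_add_one_right_eq_Icc, sum_Ico_eq_sum_range, Nat.add_sub_cancel,
    ← hf.sum_range_comp_add_one]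
  exact sum_congr rfl fun x _ => by rw [add_comm]

theorem sum_range_mul (hf : Periodic f n) (k : ℕ) :
    ∑ x ∈ range (k * n), f x = k • ∑ x ∈ range n, f x := by
  induction k with
  | zero => simp
  | succ k ih =>
    rw [Nat.succ_mul, sum_range_add, ih, succ_nsmul]
    congr 1
    exact sum_congr rfl fun x _ => by rw [add_comm]; exact hf.nat_mul k x

end Function.Periodic

theorem Polynomial.exists_eq_C_mul_add_of_dvd_coeff {R : Type*} [CommRing R] {δ : R} {f : R[X]}
    (hdvd : ∀ i, 2 ≤ i → δ ∣ f.coeff i) :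
    ∃ q : R[X], f = C (f.coeff 0) + C (f.coeff 1) * X + C δ * q := by
  have hcoeff : ∀ i, δ ∣ (f - C (f.coeff 0) - C (f.coeff 1) * X).coeff i := by
    rintro (_ | _ | i)
    · simp
    · simp
    · simpa [coeff_X] using hdvd (i + 2) (by omega)
  obtain ⟨q, hq⟩ := (C_dvd_iff_dvd_coeff δ _).2 hcoeff
  exact ⟨q, by rw [← hq]; ring⟩

theorem Polynomial.mul_dvd_eval_add_sub_eval_sub {R : Type*} [CommRing R] {δ : R} {f : R[X]}
    (hdvd : ∀ i, 2 ≤ i → δ ∣ f.coeff i) (x h : R) :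
    δ * h ∣ f.eval (x + h) - f.eval x - f.coeff 1 * h := by
  obtain ⟨q, hq⟩ := exists_eq_C_mul_add_of_dvd_coeff hdvd
  have hdiff : f.eval (x + h) - f.eval x - f.coeff 1 * h = δ * (q.eval (x + h) - q.eval x) := by
    -- keep `rw [hq]` from also rewriting the `f` inside `f.coeff 1`
    set c₁ := f.coeff 1
    rw [hq]
    simp only [eval_add, eval_mul, eval_C, eval_X]
    ring
  rw [hdiff]
  exact mul_dvd_mul_left δ (by simpa using sub_dvd_eval_sub (x + h) x q)

theorem periodic_e_eval_div (g : ℤ[X]) (m : ℕ) :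
    Periodic (fun x : ℕ => e (((g.eval (x : ℤ) : ℤ) : ℝ) / m)) m := by
  intro x
  rcases eq_or_ne m 0 with rfl | hm
  · simp
  obtain ⟨k, hk⟩ : (m : ℤ) ∣ g.eval ((x : ℤ) + m) - g.eval (x : ℤ) := by
    simpa using sub_dvd_eval_sub ((x : ℤ) + m) x g
  have hshift : ((g.eval ((x + m : ℕ) : ℤ) : ℤ) : ℝ) / m = ((g.eval (x : ℤ) : ℤ) : ℝ) / m + k := by
    rw [Nat.cast_add, eq_add_of_sub_eq' hk]
    push_cast
    field_simp
  simp only [hshift, e_add_intCast]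

theorem e_eval_add_div_mul {f : ℤ[X]} {δ m : ℕ} (hdvd : ∀ i, 2 ≤ i → (δ : ℤ) ∣ f.coeff i)
    (hδ : δ ≠ 0) (hm : m ≠ 0) (x : ℤ) :
    e (((f.eval (x + m) : ℤ) : ℝ) / (δ * m : ℕ)) =
      e ((f.coeff 1 : ℝ) / δ) * e (((f.eval x : ℤ) : ℝ) / (δ * m : ℕ)) := by
  obtain ⟨k, hk⟩ := mul_dvd_eval_add_sub_eval_sub hdvd x (m : ℤ)
  have hshift : ((f.eval (x + m) : ℤ) : ℝ) / (δ * m : ℕ) =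
        ((f.eval x : ℤ) : ℝ) / (δ * m : ℕ) + (f.coeff 1 : ℝ) / δ + k := by
    rw [show f.eval (x + m) = f.eval x + f.coeff 1 * m + δ * m * k by linear_combination hk]
    push_cast
    field_simp
  rw [hshift, e_add_intCast, e_add, mul_comm]

theorem expsum_reduce (Q δ : ℕ) (hQ : 0 < Q) (hδ : 0 < δ)
    (f : Polynomial ℤ) (hf0 : f.coeff 0 = 0)
    (hdvd : ∀ i, 2 ≤ i → (δ : ℤ) ∣ f.coeff i) (hδQ : δ ∣ Q)
    (hS : (∑ x ∈ Icc 1 Q, e (((f.eval (x : ℤ) : ℤ) : ℝ) / Q)) ≠ 0) :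
    (δ : ℤ) ∣ f.coeff 1 ∧
      (∑ x ∈ Icc 1 Q, e (((f.eval (x : ℤ) : ℤ) : ℝ) / Q)) =
        (δ : ℂ) * ∑ x ∈ Icc 1 (Q / δ),
          e (((f.eval (x : ℤ) / (δ : ℤ) : ℤ) : ℝ) / ((Q / δ : ℕ) : ℝ)) := by
  obtain ⟨m, rfl⟩ := hδQ
  have hm : m ≠ 0 := by rintro rfl; simp at hQ
  rw [Nat.mul_div_cancel_left m hδ]
  have hF := periodic_e_eval_div f (δ * m)
  rw [hF.sum_Icc_one_eq_sum_range] at hS ⊢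
  have hc : (δ : ℤ) ∣ f.coeff 1 := by
    have hrot := hF.sum_range_comp_add m
    simp only [Nat.cast_add, e_eval_add_div_mul hdvd hδ.ne' hm, ← mul_sum] at hrot
    exact (e_intCast_div_eq_one_iff hδ.ne').1 ((mul_eq_right₀ hS).1 hrot)
  refine ⟨hc, ?_⟩
  obtain ⟨g, rfl⟩ : (C (δ : ℤ)) ∣ f := by
    refine (C_dvd_iff_dvd_coeff _ _).2 fun i => ?_
    rcases i with _ | _ | i
    · simp [hf0]
    · exact hc
    · exact hdvd _ (by omega)
  have hG := periodic_e_eval_div g m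
  have hδ' : (δ : ℤ) ≠ 0 := by exact_mod_cast hδ.ne'
  calc ∑ x ∈ range (δ * m), e ((((C (δ : ℤ) * g).eval (x : ℤ) : ℤ) : ℝ) / (δ * m : ℕ))
      = ∑ x ∈ range (δ * m), e (((g.eval (x : ℤ) : ℤ) : ℝ) / m) := by
        refine sum_congr rfl fun x _ => congrArg e ?_
        simp only [eval_mul, eval_C]
        push_cast
        field_simp
    _ = δ • ∑ x ∈ range m, e (((g.eval (x : ℤ) : ℤ) : ℝ) / m) := hG.sum_range_mul δ
    _ = _ := by
        simp only [eval_mul, eval_C, Int.mul_ediv_cancel_left _ hδ']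
        rw [hG.sum_Icc_one_eq_sum_range, nsmul_eq_mul]
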